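/- Let ℰ : [0,T] × Q → ℝ ∪ {+∞} and 𝒟 be a dissipation distance satisfying the triangle inequality. Suppose for each k, q_k minimizes q ↦ ℰ(t_k, q) + 𝒟(z, z_{k−1}) over Q and q_{k−1} is stable at time t_{k−1} (i.e., ℰ(t_{k−1}, q_{k−1}) ≤ ℰ(t_{k−1}, q̃) + 𝒟(z_{k−1}, z̃) for all q̃ = (ỹ, z̃) ∈ Q), and that t ↦ ℰ(t,q) is differentiable in t for each fixed q with finite energy. Then the two-sided energy inequality holds: ∫_{t_{k−1}}^{t_k} ∂_t ℰ(θ, q_k) dθ ≤ ℰ(t_k, q_k) + 𝒟(z_k, z_{k−1}) − ℰ(t_{k−1}, q_{k−1}) ≤ ∫_{t_{k−1}}^{t_k} ∂_t ℰ(θ, q_{k−1}) dθ. -/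
import Mathlib


open intervalIntegral

/-- The two-sided energy inequality for the incremental minimization problem.
`Q` is an abstract state space `q = (y,z)` with `z`-projection `z`, `E` the
energy, `DE` its time derivative, and `Dd` a dissipation distance (symmetric,
vanishing on the diagonal, triangle inequality). If `q_k` minimizes
`q ↦ E t_k q + Dd (z q) (z q_{k-1})` and `q_{k-1}` is stable at time `t_{k-1}`,
then
`∫_{t_{k-1}}^{t_k} ∂_t E(θ, q_k) dθ ≤ E(t_k,q_k) + Dd(z_k,z_{k-1}) − E(t_{k-1},q_{k-1})
  ≤ ∫_{t_{k-1}}^{t_k} ∂_t E(θ, q_{k-1}) dθ`. -/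
theorem two_sided_energy_inequality {Q Z : Type*} (z : Q → Z)
    (E : ℝ → Q → ℝ) (DE : ℝ → Q → ℝ) (Dd : Z → Z → ℝ)
    (hderiv : ∀ (q : Q) (t : ℝ), HasDerivAt (fun τ => E τ q) (DE t q) t)
    (hint : ∀ (q : Q) (a b : ℝ), IntervalIntegrable (fun θ => DE θ q) MeasureTheory.volume a b)
    (hDd_self : ∀ a, Dd a a = 0)
    (hDd_symm : ∀ a b, Dd a b = Dd b a)
    (hDd_tri : ∀ a b c, Dd a c ≤ Dd a b + Dd b c)
    (tkm tk : ℝ) (htlt : tkm < tk) (qkm qk : Q)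
    (hmin : ∀ q' : Q, E tk qk + Dd (z qk) (z qkm) ≤ E tk q' + Dd (z q') (z qkm))
    (hstab : ∀ q' : Q, E tkm qkm ≤ E tkm q' + Dd (z qkm) (z q')) :
    (∫ θ in tkm..tk, DE θ qk) ≤
        E tk qk + Dd (z qk) (z qkm) - E tkm qkm ∧
      E tk qk + Dd (z qk) (z qkm) - E tkm qkm ≤
        ∫ θ in tkm..tk, DE θ qkm := by
  have ftc : ∀ q : Q, (∫ θ in tkm..tk, DE θ q) = E tk q - E tkm q := fun q =>
    intervalIntegral.integral_eq_sub_of_hasDerivAt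
      (fun t _ => hderiv q t) (hint q tkm tk)
  constructor
  · rw [ftc]
    have h := hstab qk
    rw [hDd_symm (z qkm) (z qk)] at h
    linarith
  · rw [ftc]
    have h := hmin qkm
    rw [hDd_self] at h
    linarith
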